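/- arXiv:math/0112225 — 2 statements merged into one kernel-verified Lean document; each statement's English description precedes it below -/
import Mathlib

section
/- Let μ and ν be probability measures on the same measurable space with μ absolutely continuous with respect to ν, and let H(μ|ν) = E_μ[log(dμ/dν)] be the relative entropy. Then for every event E with μ(E) > 0, log(ν(E)/μ(E)) ≥ -(H(μ|ν) + e⁻¹)/μ(E). -/
/-!
Split `H = ∫_E log f dμ + ∫_{Eᶜ} log f dμ` with `f = dμ/dν`. The log-sum inequality (Gibbs'
inequality for the restrictions of `μ` and `ν` to a set `s`) bounds each piece below by
`μ s * log (μ s / ν s)`. On `E` this is `-μ E * log (ν E / μ E)`; on `Eᶜ` it equals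
`ν Eᶜ * φ (μ Eᶜ / ν Eᶜ)` with `φ t = t log t ≥ -e⁻¹`, hence is at least `-e⁻¹`.
-/

open MeasureTheory MeasureTheory.Measure Real InformationTheory

lemma Real.neg_exp_neg_one_le_mul_log {x : ℝ} (hx : 0 ≤ x) : -exp (-1) ≤ x * log x := by
  rcases hx.eq_or_lt with rfl | hx
  · simpa using (exp_pos (-1)).le
  · have := mul_exp_neg_le_exp_neg_one (-log x)
    rw [neg_neg, exp_log hx] at this
    linarith

namespace MeasureTheory

variable {Ω : Type*} [MeasurableSpace Ω] {μ ν : Measure Ω} {s : Set Ω}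

lemma Measure.rnDeriv_restrict_restrict (μ ν : Measure Ω) [μ.HaveLebesgueDecomposition ν]
    [SigmaFinite ν] (hs : MeasurableSet s) :
    (μ.restrict s).rnDeriv (ν.restrict s) =ᵐ[ν.restrict s] μ.rnDeriv ν := by
  refine (eq_rnDeriv (μ := μ.restrict s) (ν := ν.restrict s)
    (s := (μ.singularPart ν).restrict s) (measurable_rnDeriv μ ν)
    (((mutuallySingular_singularPart μ ν).restrict s).symm.restrict s).symm ?_).symm
  rw [← restrict_withDensity hs, ← restrict_add, ← μ.haveLebesgueDecomposition_add ν]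

lemma llr_restrict_ae_eq [SigmaFinite μ] [SigmaFinite ν] (hμν : μ ≪ ν) (hs : MeasurableSet s) :
    llr (μ.restrict s) (ν.restrict s) =ᵐ[μ.restrict s] llr μ ν := by
  filter_upwards [(hμν.restrict s).ae_le (rnDeriv_restrict_restrict μ ν hs)] with x hx
  simp only [llr_def, hx]

lemma mul_log_le_setIntegral_llr [IsFiniteMeasure μ] [IsFiniteMeasure ν] (hμν : μ ≪ ν)
    (hs : MeasurableSet s) (h_int : IntegrableOn (llr μ ν) s μ) :
    μ.real s * log (μ.real s / ν.real s) ≤ ∫ x in s, llr μ ν x ∂μ := by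
  have h_ae := llr_restrict_ae_eq hμν hs
  have h_int' : Integrable (llr (μ.restrict s) (ν.restrict s)) (μ.restrict s) :=
    h_int.congr h_ae.symm
  have h_gibbs := (mul_log_le_toReal_klDiv (hμν.restrict s) h_int').trans_eq
    (toReal_klDiv (hμν.restrict s) h_int')
  simp only [measureReal_restrict_apply_univ, integral_congr_ae h_ae] at h_gibbs
  linarith

lemma neg_exp_neg_one_mul_le_measureReal_mul_log [IsFiniteMeasure ν] (hμν : μ ≪ ν) (s : Set Ω) :
    -exp (-1) * ν.real s ≤ μ.real s * log (μ.real s / ν.real s) := by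
  rcases (measureReal_nonneg : 0 ≤ ν.real s).eq_or_lt with hν | hν
  · have hνs : ν s = 0 := (measureReal_eq_zero_iff (μ := ν)).mp hν.symm
    simp [measureReal_def, hνs, hμν hνs]
  · calc -exp (-1) * ν.real s
        ≤ μ.real s / ν.real s * log (μ.real s / ν.real s) * ν.real s :=
          mul_le_mul_of_nonneg_right (neg_exp_neg_one_le_mul_log (by positivity)) hν.le
      _ = μ.real s * log (μ.real s / ν.real s) := by field_simp

end MeasureTheory

/-- Entropy inequality: for probability measures `μ ≪ ν` with relative entropy
`H = E_μ[log dμ/dν]`, and any event `E` with `μ E > 0`,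
`log (ν E / μ E) ≥ -(H + e⁻¹) / μ E`. -/
theorem stmt_0 {Ω : Type*} [MeasurableSpace Ω] (μ ν : Measure Ω)
    [IsProbabilityMeasure μ] [IsProbabilityMeasure ν] (hac : μ ≪ ν)
    (hInt : Integrable (fun x => Real.log ((μ.rnDeriv ν) x).toReal) μ)
    (H : ℝ) (hH : H = ∫ x, Real.log ((μ.rnDeriv ν) x).toReal ∂μ)
    (E : Set Ω) (hE : MeasurableSet E) (hpos : 0 < (μ E).toReal) :
    Real.log ((ν E).toReal / (μ E).toReal) ≥ -(H + Real.exp (-1)) / (μ E).toReal := by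
  have h_int : Integrable (llr μ ν) μ := hInt
  have h_split : H = ∫ x in E, llr μ ν x ∂μ + ∫ x in Eᶜ, llr μ ν x ∂μ :=
    hH.trans (integral_add_compl hE h_int).symm
  have h_on := mul_log_le_setIntegral_llr hac hE h_int.integrableOn
  have h_off := (neg_exp_neg_one_mul_le_measureReal_mul_log hac Eᶜ).trans
    (mul_log_le_setIntegral_llr hac hE.compl h_int.integrableOn)
  have h_ν : exp (-1) * ν.real Eᶜ ≤ exp (-1) :=
    mul_le_of_le_one_right (exp_pos _).le measureReal_le_one
  have h_swap : log (ν.real E / μ.real E) = -log (μ.real E / ν.real E) := by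
    rw [← log_inv, inv_div]
  rw [ge_iff_le, div_le_iff₀ hpos]
  simp only [← measureReal_def, h_swap]
  linarith
end

section
/- Let Z be a centered Gaussian random variable with variance G > 0 and σ an independent real random variable with lim_{r→∞} r⁻² log P(σ > r) = -1/(2Q) for some Q > 0. Then for any α ∈ (0, 4(G+Q)) and any ε > 0, for all sufficiently large N, P(Z ≤ -(G/(G+Q))√(α log N)) · P(σ ≥ (Q/(G+Q))√(α log N)) ≥ N^{-(α+ε)/(2(G+Q))}. -/
/-!
Both factors are bounded below by Gaussian-type exponentials. The Gaussian one is at least the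
mass of the unit interval `[-s-1, -s]`, i.e. `c₀ exp (-(s+1)²/(2G))`, and the hypothesis on `σ`
gives `P(σ > r) ≥ exp (-(1/(2Q) + δ) r²)` for every `δ > 0` and large `r`. With
`s = G u/(G+Q)`, `r = Q u/(G+Q)` and `u² = α log N` the quadratic parts of the two exponents add
up to exactly `-α log N/(2(G+Q))`; the linear term, the constant and the loss `δ` are absorbed by
`ε log N`.
-/

open MeasureTheory ProbabilityTheory Real Filter

lemma gaussianReal_real_Iic_neg_ge {v : NNReal} (hv : v ≠ 0) {s : ℝ} (hs : 0 ≤ s) :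
    (√(2 * π * v))⁻¹ * exp (-(s + 1) ^ 2 / (2 * v)) ≤
      (gaussianReal 0 v).real (Set.Iic (-s)) := by
  rw [measureReal_def, gaussianReal_apply_eq_integral 0 hv, ENNReal.toReal_ofReal
    (setIntegral_nonneg measurableSet_Iic fun x _ => gaussianPDFReal_nonneg 0 v x)]
  calc (√(2 * π * v))⁻¹ * exp (-(s + 1) ^ 2 / (2 * v))
      = ∫ _ in Set.Icc (-s - 1) (-s), (√(2 * π * v))⁻¹ * exp (-(s + 1) ^ 2 / (2 * v)) := by
        simp [Real.volume_real_Icc]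
    _ ≤ ∫ x in Set.Icc (-s - 1) (-s), gaussianPDFReal 0 v x := by
        refine setIntegral_mono_on (integrableOn_const (by simp))
          (integrable_gaussianPDFReal 0 v).integrableOn measurableSet_Icc fun x hx => ?_
        have hx2 : x ^ 2 ≤ (s + 1) ^ 2 := sq_le_sq' (by linarith [hx.1]) (by linarith [hx.2])
        rw [gaussianPDFReal, sub_zero]
        gcongr
    _ ≤ ∫ x in Set.Iic (-s), gaussianPDFReal 0 v x :=
        setIntegral_mono_set (integrable_gaussianPDFReal 0 v).integrableOn
          (ae_of_all _ (gaussianPDFReal_nonneg 0 v)) Set.Icc_subset_Iic_self.eventuallyLE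

lemma measureReal_le_neg_ge_of_map_eq_gaussianReal {Ω : Type*} [MeasurableSpace Ω]
    {P : Measure Ω} {Z : Ω → ℝ} (hZmeas : Measurable Z) {v : NNReal} (hv : v ≠ 0)
    (hZ : P.map Z = gaussianReal 0 v) {s : ℝ} (hs : 0 ≤ s) :
    (√(2 * π * v))⁻¹ * exp (-(s + 1) ^ 2 / (2 * v)) ≤ P.real {ω | Z ω ≤ -s} := by
  rw [show {ω | Z ω ≤ -s} = Z ⁻¹' Set.Iic (-s) from rfl,
    ← map_measureReal_apply hZmeas measurableSet_Iic, hZ]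
  exact gaussianReal_real_Iic_neg_ge hv hs

lemma eventually_exp_mul_sq_le_of_tendsto_log_div_sq {p : ℝ → ℝ} (hp : ∀ r, 0 ≤ p r)
    {c : ℝ} (hc : c < 0) (h : Tendsto (fun r => log (p r) / r ^ 2) atTop (nhds c))
    {a : ℝ} (ha : a < c) :
    ∀ᶠ r in atTop, exp (a * r ^ 2) ≤ p r := by
  filter_upwards [h.eventually_const_lt ha, h.eventually_lt_const hc,
    eventually_gt_atTop 0] with r hlow hneg hr
  have hr2 : 0 < r ^ 2 := by positivity
  have hlog : log (p r) < 0 := by simpa [div_neg_iff, hr2, not_lt_of_gt hr2] using hneg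
  -- `log 0 = 0`, so a negative logarithm forces `p r ≠ 0`.
  have hpos : 0 < p r := (hp r).lt_of_ne fun h0 => by simp [← h0] at hlog
  calc exp (a * r ^ 2) ≤ exp (log (p r)) := exp_le_exp.2 ((lt_div_iff₀ hr2).1 hlow).le
    _ = p r := exp_log hpos

lemma tendsto_quadratic_atTop {a : ℝ} (ha : 0 < a) (b c : ℝ) :
    Tendsto (fun u : ℝ => a * u ^ 2 + b * u + c) atTop atTop := by
  have hlin : Tendsto (fun u : ℝ => a * u + b) atTop atTop :=
    tendsto_atTop_add_const_right _ b (tendsto_id.const_mul_atTop ha)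
  refine tendsto_atTop_add_const_right _ c ((tendsto_id.atTop_mul_atTop₀ hlin).congr fun u => ?_)
  simp only [id_eq]
  ring

-- `G/(G+Q)` and `Q/(G+Q)` are the split of `u` minimizing `s²/(2G) + r²/(2Q)` under `s + r = u`.
lemma eventually_neg_mul_sq_le_split_exponent {G Q α ε : ℝ} (hG : 0 < G) (hQ : 0 < Q)
    (hα : 0 < α) (hε : 0 < ε) (c : ℝ) :
    ∀ᶠ u in atTop, -(α + ε) / (2 * (G + Q)) * (u ^ 2 / α) ≤
      c - (G / (G + Q) * u + 1) ^ 2 / (2 * G) +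
        (-1 / (2 * Q) - ε * (G + Q) / (4 * α * Q ^ 2)) * (Q / (G + Q) * u) ^ 2 := by
  have hS : 0 < G + Q := by positivity
  filter_upwards [(tendsto_quadratic_atTop (by positivity : 0 < ε / (4 * α * (G + Q)))
    (-1 / (G + Q)) (c - 1 / (2 * G))).eventually_ge_atTop 0] with u hu
  have hdiff : c - (G / (G + Q) * u + 1) ^ 2 / (2 * G) +
      (-1 / (2 * Q) - ε * (G + Q) / (4 * α * Q ^ 2)) * (Q / (G + Q) * u) ^ 2 -
        -(α + ε) / (2 * (G + Q)) * (u ^ 2 / α) =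
      ε / (4 * α * (G + Q)) * u ^ 2 + -1 / (G + Q) * u + (c - 1 / (2 * G)) := by
    field_simp
    ring
  linarith

theorem stmt_7_general {Ω : Type*} [MeasurableSpace Ω] (P : Measure Ω) [IsProbabilityMeasure P]
    (G : NNReal) (hG : 0 < G) (Z : Ω → ℝ) (hZmeas : Measurable Z)
    (hZ : Measure.map Z P = gaussianReal 0 G)
    (σ : Ω → ℝ)
    (Q : ℝ) (hQ : 0 < Q)
    (htail : Tendsto (fun r : ℝ => Real.log (P {ω | r < σ ω}).toReal / r ^ 2)
      atTop (nhds (-1 / (2 * Q)))) :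
    ∀ α : ℝ, 0 < α → α < 4 * ((G : ℝ) + Q) → ∀ ε : ℝ, 0 < ε →
      ∀ᶠ N : ℕ in atTop,
        (N : ℝ) ^ (-(α + ε) / (2 * ((G : ℝ) + Q))) ≤
          (P {ω | Z ω ≤ -(((G : ℝ) / ((G : ℝ) + Q)) * Real.sqrt (α * Real.log N))}).toReal *
          (P {ω | ((Q / ((G : ℝ) + Q)) * Real.sqrt (α * Real.log N)) ≤ σ ω}).toReal := by
  intro α hα _ ε hε
  have hG' : (0 : ℝ) < G := hG
  set S : ℝ := G + Q
  set c₀ : ℝ := (√(2 * π * G))⁻¹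
  have hσ := eventually_exp_mul_sq_le_of_tendsto_log_div_sq (fun _ => measureReal_nonneg)
    (by simp [div_neg_iff, hQ] : -1 / (2 * Q) < 0) htail
    (sub_lt_self _ (by positivity : 0 < ε * S / (4 * α * Q ^ 2)))
  have hu : Tendsto (fun N : ℕ => √(α * log N)) atTop atTop :=
    tendsto_sqrt_atTop.comp
      ((tendsto_log_atTop.comp tendsto_natCast_atTop_atTop).const_mul_atTop hα)
  filter_upwards [hu.eventually (eventually_neg_mul_sq_le_split_exponent hG' hQ hα hε (log c₀)),
    (hu.const_mul_atTop (by positivity : 0 < Q / S)).eventually hσ,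
    eventually_ge_atTop 1] with N hexp hσN hN
  have hN' : (1 : ℝ) ≤ N := by exact_mod_cast hN
  set u := √(α * log N)
  have hu2 : u ^ 2 / α = log N := by
    rw [sq_sqrt (by positivity)]
    field_simp
  calc (N : ℝ) ^ (-(α + ε) / (2 * S))
      = exp (-(α + ε) / (2 * S) * (u ^ 2 / α)) := by
        rw [rpow_def_of_pos (by linarith), hu2, mul_comm]
    _ ≤ exp (log c₀ - (G / S * u + 1) ^ 2 / (2 * G) +
          (-1 / (2 * Q) - ε * S / (4 * α * Q ^ 2)) * (Q / S * u) ^ 2) := exp_le_exp.2 hexp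
    _ = c₀ * exp (-(G / S * u + 1) ^ 2 / (2 * G)) *
          exp ((-1 / (2 * Q) - ε * S / (4 * α * Q ^ 2)) * (Q / S * u) ^ 2) := by
        rw [sub_eq_add_neg (log c₀), exp_add, exp_add, exp_log (by positivity), ← neg_div]
    _ ≤ P.real {ω | Z ω ≤ -(G / S * u)} * P.real {ω | Q / S * u < σ ω} :=
        mul_le_mul (measureReal_le_neg_ge_of_map_eq_gaussianReal hZmeas hG.ne' hZ
          (by positivity)) hσN (exp_nonneg _) measureReal_nonneg
    _ ≤ P.real {ω | Z ω ≤ -(G / S * u)} * P.real {ω | Q / S * u ≤ σ ω} :=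
        mul_le_mul_of_nonneg_left (measureReal_mono fun _ h => Set.mem_ofPred.2 (le_of_lt h))
          measureReal_nonneg

/-- For `Z ~ N(0,G)` and an independent `σ` with almost-Gaussian upward tail of
parameter `Q`, for any `α ∈ (0, 4(G+Q))` and `ε > 0`, eventually in `N`,
`P(Z ≤ -(G/(G+Q))√(α log N)) · P(σ ≥ (Q/(G+Q))√(α log N)) ≥ N^{-(α+ε)/(2(G+Q))}`. -/
theorem stmt_7 {Ω : Type*} [MeasurableSpace Ω] (P : Measure Ω) [IsProbabilityMeasure P]
    (G : NNReal) (hG : 0 < G) (Z : Ω → ℝ) (hZmeas : Measurable Z)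
    (hZ : Measure.map Z P = gaussianReal 0 G)
    (σ : Ω → ℝ) (hσmeas : Measurable σ)
    (hind : IndepFun Z σ P)
    (Q : ℝ) (hQ : 0 < Q)
    (htail : Tendsto (fun r : ℝ => Real.log (P {ω | r < σ ω}).toReal / r ^ 2)
      atTop (nhds (-1 / (2 * Q)))) :
    ∀ α : ℝ, 0 < α → α < 4 * ((G : ℝ) + Q) → ∀ ε : ℝ, 0 < ε →
      ∀ᶠ N : ℕ in atTop,
        (N : ℝ) ^ (-(α + ε) / (2 * ((G : ℝ) + Q))) ≤
          (P {ω | Z ω ≤ -(((G : ℝ) / ((G : ℝ) + Q)) * Real.sqrt (α * Real.log N))}).toReal *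
          (P {ω | ((Q / ((G : ℝ) + Q)) * Real.sqrt (α * Real.log N)) ≤ σ ω}).toReal :=
  stmt_7_general P G hG Z hZmeas hZ σ Q hQ htail
end
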